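/- arXiv:1501.01123 — 2 statements merged into one kernel-verified Lean document; each statement's English description precedes it below -/
import Mathlib

section
/- For every smooth p-form Θ on M and all smooth vector fields X_1,…,X_{p+1}, the generalized first structure equation holds: T_Θ(X_1,…,X_{p+1}) = dΘ(X_1,…,X_{p+1}) + Ξ_Θ(X_1,…,X_{p+1}). -/
open scoped Manifold

local notation "∞" => (⊤ : ℕ∞)

noncomputable section

variable {E : Type*} [NormedAddCommGroup E] [NormedSpace ℝ E]
  {H : Type*} [TopologicalSpace H]

/-- A linear connection on the smooth manifold `M`, given as an operator on global smooth
vector fields (realised as derivations of the algebra `C^∞(M)` of smooth real-valued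
functions) which is ℝ-bilinear, `C^∞(M)`-linear in its first argument and satisfies the
Leibniz rule `∇_X (f • Y) = X f • Y + f • ∇_X Y` in its second argument. -/
structure LinearConnection (I : ModelWithCorners ℝ E H) (M : Type*) [TopologicalSpace M]
    [ChartedSpace H M] [IsManifold I ∞ M] where
  cov : Derivation ℝ C^∞⟮I, M; ℝ⟯ C^∞⟮I, M; ℝ⟯ →
        Derivation ℝ C^∞⟮I, M; ℝ⟯ C^∞⟮I, M; ℝ⟯ →
        Derivation ℝ C^∞⟮I, M; ℝ⟯ C^∞⟮I, M; ℝ⟯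
  add_left : ∀ X X' Y, cov (X + X') Y = cov X Y + cov X' Y
  smul_real_left : ∀ (r : ℝ) (X Y), cov (r • X) Y = r • cov X Y
  smul_smooth_left : ∀ (f : C^∞⟮I, M; ℝ⟯) (X Y), cov (f • X) Y = f • cov X Y
  add_right : ∀ X Y Y', cov X (Y + Y') = cov X Y + cov X Y'
  smul_real_right : ∀ (r : ℝ) (X Y), cov X (r • Y) = r • cov X Y
  leibniz : ∀ (f : C^∞⟮I, M; ℝ⟯) (X Y), cov X (f • Y) = X f • Y + f • cov X Y

variable {I : ModelWithCorners ℝ E H}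
  {M : Type*} [TopologicalSpace M] [ChartedSpace H M] [IsManifold I ∞ M]

/-- Smooth real-valued functions on `M`. -/
local notation "Cinf" => C^∞⟮I, M; ℝ⟯
/-- Smooth global vector fields on `M`, as derivations of `C^∞(M)`. -/
local notation "VF" => Derivation ℝ C^∞⟮I, M; ℝ⟯ C^∞⟮I, M; ℝ⟯

namespace LinearConnection

variable (nab : LinearConnection I M)

/-- The torsion `T(X,Y) := ∇_X Y − ∇_Y X − [X,Y]` of a linear connection. -/
def torsion (X Y : VF) : VF := nab.cov X Y - nab.cov Y X - ⁅X, Y⁆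

/-- The curvature `R(X,Y)Z := ∇_X ∇_Y Z − ∇_Y ∇_X Z − ∇_{[X,Y]} Z` of a linear connection. -/
def curv (X Y Z : VF) : VF :=
  nab.cov X (nab.cov Y Z) - nab.cov Y (nab.cov X Z) - nab.cov ⁅X, Y⁆ Z

/-- The covariant derivative along `X` of a scalar-valued map of one vector field
argument (e.g. a 1-form): `(∇_X θ)(Y) := X(θ(Y)) − θ(∇_X Y)`. -/
def covOne (X : VF) (θ : VF → Cinf) : VF → Cinf :=
  fun Y => X (θ Y) - θ (nab.cov X Y)

/-- The covariant derivative `(∇_X T)(Y,Z) := ∇_X(T(Y,Z)) − T(∇_X Y, Z) − T(Y, ∇_X Z)`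
of the torsion. -/
def covTorsion (X Y Z : VF) : VF :=
  nab.cov X (nab.torsion Y Z) - nab.torsion (nab.cov X Y) Z - nab.torsion Y (nab.cov X Z)

/-- The covariant derivative
`(∇_X R)(Y,Z)W := ∇_X(R(Y,Z)W) − R(∇_X Y,Z)W − R(Y,∇_X Z)W − R(Y,Z)(∇_X W)`
of the curvature. -/
def covCurv (X Y Z W : VF) : VF :=
  nab.cov X (nab.curv Y Z W) - nab.curv (nab.cov X Y) Z W - nab.curv Y (nab.cov X Z) W
    - nab.curv Y Z (nab.cov X W)

end LinearConnection

/-- The exterior derivative of a 1-form (given as a bare function on vector fields):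
`dα(X,Y) := X(α(Y)) − Y(α(X)) − α([X,Y])`. -/
def extD1 (α : VF → Cinf) (X Y : VF) : Cinf :=
  X (α Y) - Y (α X) - α ⁅X, Y⁆

/-- The exterior derivative of a 2-form (given as a bare function on vector fields):
`dβ(X,Y,Z) := X(β(Y,Z)) + Y(β(Z,X)) + Z(β(X,Y)) − β([X,Y],Z) − β([Y,Z],X) − β([Z,X],Y)`. -/
def extD2 (β : VF → VF → Cinf) (X Y Z : VF) : Cinf :=
  X (β Y Z) + Y (β Z X) + Z (β X Y) - β ⁅X, Y⁆ Z - β ⁅Y, Z⁆ X - β ⁅Z, X⁆ Y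

/-- Remove the entry at position `i` from a sequence. -/
def seqRemove {α : Type*} (i : ℕ) (X : ℕ → α) : ℕ → α :=
  fun k => if k < i then X k else X (k + 1)

/-- Prepend an entry to a sequence. -/
def seqCons {α : Type*} (v : α) (X : ℕ → α) : ℕ → α :=
  fun k => if k = 0 then v else X (k - 1)

/-- Extend a finite tuple of vector fields to a sequence (by zero). -/
def seqOf {α : Type*} [Zero α] {n : ℕ} (X : Fin n → α) : ℕ → α :=
  fun k => if h : k < n then X ⟨k, h⟩ else 0

/-- Evaluate a `p`-form (an alternating `C^∞(M)`-multilinear map on `p`-tuples of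
vector fields) on the first `p` entries of a sequence of vector fields. -/
def seqApp (p : ℕ) (Θ : AlternatingMap Cinf VF Cinf (Fin p)) (X : ℕ → VF) : Cinf :=
  Θ fun k => X (k : ℕ)

namespace LinearConnection

variable (nab : LinearConnection I M)

/-- The covariant derivative along `W` of a `p`-form (given as a bare function on
sequences of vector fields, depending on the first `p` entries):
`(∇_W Θ)(Y_1,…,Y_p) := W(Θ(Y_1,…,Y_p)) − Σ_i Θ(Y_1,…,∇_W Y_i,…,Y_p)`. -/
def covSeq (p : ℕ) (W : VF) (F : (ℕ → VF) → Cinf) (X : ℕ → VF) : Cinf :=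
  W (F X) - ∑ k : Fin p, F (Function.update X (k : ℕ) (nab.cov W (X (k : ℕ))))

end LinearConnection

/-- The exterior derivative of a `p`-form (given as a bare function on sequences of
vector fields, depending on the first `p` entries), evaluated on the first `p+1`
entries of a sequence (zero-based indexing):
`dΘ(X_0,…,X_p) = Σ_i (−1)^i X_i(Θ(…,X̄_i,…)) + Σ_{i<j} (−1)^{i+j} Θ([X_i,X_j],…,X̄_i,…,X̄_j,…)`. -/
def extDSeq (p : ℕ) (F : (ℕ → VF) → Cinf) (X : ℕ → VF) : Cinf :=
  (∑ i : Fin (p + 1), (-1 : ℝ) ^ (i : ℕ) • (X (i : ℕ)) (F (seqRemove (i : ℕ) X)))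
  + ∑ i : Fin (p + 1), ∑ j : Fin (p + 1),
      if (i : ℕ) < (j : ℕ) then
        (-1 : ℝ) ^ ((i : ℕ) + (j : ℕ)) •
          F (seqCons ⁅X (i : ℕ), X (j : ℕ)⁆ (seqRemove (i : ℕ) (seqRemove (j : ℕ) X)))
      else 0

/-- `T_Θ` for a `p`-form `Θ` (zero-based indexing):
`T_Θ(X_0,…,X_p) := Σ_{i<j} (−1)^{i+j+1} Θ(T(X_i,X_j),X_0,…,X̄_i,…,X̄_j,…,X_p)`. -/
def torsionForm (nab : LinearConnection I M) (p : ℕ) (F : (ℕ → VF) → Cinf)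
    (X : ℕ → VF) : Cinf :=
  ∑ i : Fin (p + 1), ∑ j : Fin (p + 1),
    if (i : ℕ) < (j : ℕ) then
      (-1 : ℝ) ^ ((i : ℕ) + (j : ℕ) + 1) •
        F (seqCons (nab.torsion (X (i : ℕ)) (X (j : ℕ)))
            (seqRemove (i : ℕ) (seqRemove (j : ℕ) X)))
    else 0

/-- `Ξ_Θ` for a `p`-form `Θ` (zero-based indexing):
`Ξ_Θ(X_0,…,X_p) := Σ_i (−1)^{i+1} (∇_{X_i}Θ)(X_0,…,X̄_i,…,X_p)`. -/
def xiForm (nab : LinearConnection I M) (p : ℕ) (F : (ℕ → VF) → Cinf)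
    (X : ℕ → VF) : Cinf :=
  ∑ i : Fin (p + 1),
    (-1 : ℝ) ^ ((i : ℕ) + 1) • nab.covSeq p (X (i : ℕ)) F (seqRemove (i : ℕ) X)

/-!
Expanding `T(X_i, X_j) = ∇_{X_i} X_j − ∇_{X_j} X_i − [X_i, X_j]` in the first slot of `Θ`
turns the bracket terms of `T_Θ` into the bracket part of `dΘ`. Expanding `Ξ_Θ`, the terms
`X_i(Θ(…, X̄_i, …))` cancel the remaining part of `dΘ`, and alternation moves each
`∇_{X_i} X_j` to the front of `Θ`. What is left on both sides is the same sum of terms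
`± Θ(∇_{X_i} X_j, …, X̄_i, …, X̄_j, …)`: over ordered pairs `i ≠ j` in `Ξ_Θ`, and over
pairs `i < j`, taken in both orders, in `T_Θ`.
-/

theorem seqRemove_seqRemove_of_le {α : Type*} {i k : ℕ} (h : i ≤ k) (Y : ℕ → α) :
    seqRemove k (seqRemove i Y) = seqRemove i (seqRemove (k + 1) Y) := by
  funext m
  simp only [seqRemove]
  split_ifs <;> first | rfl | (congr 1; omega)

theorem seqCons_comp_val {α : Type*} {n : ℕ} (v : α) (Y : ℕ → α) :
    (fun k : Fin (n + 1) => seqCons v Y k) = Fin.cons v fun k : Fin n => Y k := by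
  funext k
  cases k using Fin.cases <;> simp [seqCons]

theorem update_comp_val_eq_insertNth {α : Type*} {n : ℕ} (Y : ℕ → α) (m : Fin (n + 1))
    (v : α) :
    (fun k : Fin (n + 1) => Function.update Y m v k) =
      m.insertNth v fun k : Fin n => seqRemove m Y k := by
  funext k
  induction k using m.succAboveCases with
  | x => simp
  | p j =>
    rw [Fin.insertNth_apply_succAbove,
      Function.update_of_ne (by simp [Fin.val_eq_val, Fin.succAbove_ne m j])]
    simp only [Fin.succAbove, Fin.lt_def, Fin.val_castSucc, seqRemove]
    split_ifs <;> rfl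

theorem Finset.sum_sum_ite_lt_add_swap {ι M : Type*} [Fintype ι] [LinearOrder ι]
    [AddCommMonoid M] (f : ι → ι → M) :
    ∑ i, ∑ j, (if i < j then f i j + f j i else 0) =
      ∑ i, ∑ j, if i ≠ j then f i j else 0 := by
  have hswap :
      ∑ i, ∑ j, (if i < j then f j i else 0) = ∑ i, ∑ j, if j < i then f i j else 0 :=
    Finset.sum_comm
  simp_rw [ite_add_zero, Finset.sum_add_distrib, hswap, ← Finset.sum_add_distrib]
  refine Finset.sum_congr rfl fun i _ => Finset.sum_congr rfl fun j _ => ?_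
  rcases lt_trichotomy i j with h | rfl | h
  · simp [h, h.ne, not_lt_of_gt h]
  · simp
  · simp [h, h.ne', not_lt_of_gt h]

theorem Fin.sum_ite_ne_eq_sum_succAbove {M : Type*} [AddCommMonoid M] {n : ℕ} (i : Fin (n + 1))
    (f : Fin (n + 1) → M) : ∑ j, (if i ≠ j then f j else 0) = ∑ k, f (i.succAbove k) := by
  rw [Fin.sum_univ_succAbove _ i]
  simp [(Fin.succAbove_ne i _).symm]

omit [IsManifold I ∞ M] in
theorem seqApp_seqCons_sub (q : ℕ) (Θ : AlternatingMap Cinf VF Cinf (Fin (q + 1)))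
    (a b : VF) (R : ℕ → VF) :
    seqApp (q + 1) Θ (seqCons (a - b) R) =
      seqApp (q + 1) Θ (seqCons a R) - seqApp (q + 1) Θ (seqCons b R) := by
  simpa only [seqApp, seqCons_comp_val, Fin.update_cons_zero] using
    Θ.map_update_sub (Fin.cons a fun k : Fin q => R k) 0 a b

omit [IsManifold I ∞ M] in
theorem seqApp_update (q : ℕ) (Θ : AlternatingMap Cinf VF Cinf (Fin (q + 1)))
    (Y : ℕ → VF) (m : Fin (q + 1)) (v : VF) :
    seqApp (q + 1) Θ (Function.update Y m v) =
      (-1 : ℝ) ^ (m : ℕ) • seqApp (q + 1) Θ (seqCons v (seqRemove m Y)) := by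
  rw [seqApp, seqApp, update_comp_val_eq_insertNth, seqCons_comp_val, Θ.map_insertNth,
    ← algebraMap_smul Cinf ((-1 : ℝ) ^ (m : ℕ))]
  simp [Matrix.vecCons]

namespace LinearConnection

variable (nab : LinearConnection I M)

/-- The sign is `(-1)^(a + b')`, where `b'` is the position of `X_b` once `X_a` is removed. -/
def covPairTerm (F : (ℕ → VF) → Cinf) (X : ℕ → VF) (a b : ℕ) : Cinf :=
  if a < b then
    (-1 : ℝ) ^ (a + b + 1) • F (seqCons (nab.cov (X a) (X b)) (seqRemove a (seqRemove b X)))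
  else (-1 : ℝ) ^ (a + b) • F (seqCons (nab.cov (X a) (X b)) (seqRemove b (seqRemove a X)))

theorem neg_one_pow_smul_eq_covPairTerm_succAbove (F : (ℕ → VF) → Cinf) (X : ℕ → VF)
    {n : ℕ} (i : Fin (n + 1)) (k : Fin n) :
    (-1 : ℝ) ^ ((i : ℕ) + k) •
        F (seqCons (nab.cov (X i) (seqRemove i X k)) (seqRemove k (seqRemove i X))) =
      nab.covPairTerm F X i (i.succAbove k) := by
  by_cases hk : (k : ℕ) < i
  · have hj : (i.succAbove k : ℕ) = k := by simp [Fin.succAbove, Fin.lt_def, hk]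
    rw [covPairTerm, hj, if_neg (by omega), seqRemove, if_pos hk]
  · have hj : (i.succAbove k : ℕ) = k + 1 := by simp [Fin.succAbove, Fin.lt_def, hk]
    have hsign : (-1 : ℝ) ^ ((i : ℕ) + (k + 1) + 1) = (-1) ^ ((i : ℕ) + k) := by ring
    rw [covPairTerm, hj, if_pos (by omega), hsign, seqRemove, if_neg hk,
      seqRemove_seqRemove_of_le (not_lt.mp hk)]

theorem neg_one_pow_smul_torsion (q : ℕ) (Θ : AlternatingMap Cinf VF Cinf (Fin (q + 1)))
    (X : ℕ → VF) {i j : ℕ} (hij : i < j) :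
    (-1 : ℝ) ^ (i + j + 1) •
        seqApp (q + 1) Θ (seqCons (nab.torsion (X i) (X j)) (seqRemove i (seqRemove j X))) =
      (-1 : ℝ) ^ (i + j) •
          seqApp (q + 1) Θ (seqCons ⁅X i, X j⁆ (seqRemove i (seqRemove j X))) +
        (nab.covPairTerm (seqApp (q + 1) Θ) X i j +
          nab.covPairTerm (seqApp (q + 1) Θ) X j i) := by
  rw [covPairTerm, covPairTerm, if_pos hij, if_neg hij.not_gt, torsion, seqApp_seqCons_sub,
    seqApp_seqCons_sub, add_comm j i, pow_succ]
  module

theorem torsionForm_seqApp (q : ℕ) (Θ : AlternatingMap Cinf VF Cinf (Fin (q + 1)))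
    (X : ℕ → VF) :
    torsionForm nab (q + 1) (seqApp (q + 1) Θ) X =
      extDSeq (q + 1) (seqApp (q + 1) Θ) X -
          ∑ i : Fin (q + 2), (-1 : ℝ) ^ (i : ℕ) • X i (seqApp (q + 1) Θ (seqRemove i X)) +
        ∑ i : Fin (q + 2), ∑ j : Fin (q + 2), if i < j then
          nab.covPairTerm (seqApp (q + 1) Θ) X i j + nab.covPairTerm (seqApp (q + 1) Θ) X j i
          else 0 := by
  rw [extDSeq, add_sub_cancel_left, ← Finset.sum_add_distrib, torsionForm]
  refine Finset.sum_congr rfl fun i _ => ?_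
  rw [← Finset.sum_add_distrib]
  refine Finset.sum_congr rfl fun j _ => ?_
  by_cases hij : i < j
  · simp only [if_pos hij, if_pos (Fin.lt_def.mp hij), nab.neg_one_pow_smul_torsion q Θ X hij]
  · simp only [if_neg hij, if_neg (Fin.lt_def.not.mp hij), add_zero]

theorem neg_one_pow_smul_covSeq (q : ℕ) (Θ : AlternatingMap Cinf VF Cinf (Fin (q + 1)))
    (X : ℕ → VF) (i : Fin (q + 2)) :
    (-1 : ℝ) ^ ((i : ℕ) + 1) • nab.covSeq (q + 1) (X i) (seqApp (q + 1) Θ) (seqRemove i X) =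
      -((-1 : ℝ) ^ (i : ℕ) • X i (seqApp (q + 1) Θ (seqRemove i X))) +
        ∑ j, if i ≠ j then nab.covPairTerm (seqApp (q + 1) Θ) X i j else 0 := by
  rw [Fin.sum_ite_ne_eq_sum_succAbove, covSeq, pow_succ, mul_neg_one, neg_smul, smul_sub,
    Finset.smul_sum]
  simp_rw [seqApp_update, smul_smul, ← pow_add, neg_one_pow_smul_eq_covPairTerm_succAbove]
  abel

theorem xiForm_seqApp (q : ℕ) (Θ : AlternatingMap Cinf VF Cinf (Fin (q + 1))) (X : ℕ → VF) :
    xiForm nab (q + 1) (seqApp (q + 1) Θ) X =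
      -∑ i : Fin (q + 2), (-1 : ℝ) ^ (i : ℕ) • X i (seqApp (q + 1) Θ (seqRemove i X)) +
        ∑ i : Fin (q + 2), ∑ j,
          if i ≠ j then nab.covPairTerm (seqApp (q + 1) Θ) X i j else 0 := by
  simp_rw [xiForm, neg_one_pow_smul_covSeq, Finset.sum_add_distrib, Finset.sum_neg_distrib]

end LinearConnection

/-- **Generalized first structure equation.** For every `p`-form `Θ` and vector fields
`X_0,…,X_p`: `T_Θ(X_0,…,X_p) = dΘ(X_0,…,X_p) + Ξ_Θ(X_0,…,X_p)`. -/
theorem first_structure_equation_p_form (nab : LinearConnection I M) (p : ℕ)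
    (Θ : AlternatingMap Cinf VF Cinf (Fin p)) (X : Fin (p + 1) → VF) :
    torsionForm nab p (seqApp p Θ) (seqOf X) =
      extDSeq p (seqApp p Θ) (seqOf X) + xiForm nab p (seqApp p Θ) (seqOf X) := by
  rcases p with _ | q
  · simp [torsionForm, extDSeq, xiForm, LinearConnection.covSeq]
  · rw [nab.torsionForm_seqApp, nab.xiForm_seqApp, Finset.sum_sum_ite_lt_add_swap]
    abel
end
end

section
/- For every smooth 1-form θ on M and all smooth vector fields X,Y,Z, dΞ_θ(X,Y,Z) = R_θ(X,Y,Z) + (∇_X θ)(T(Y,Z)) + (∇_Y θ)(T(Z,X)) + (∇_Z θ)(T(X,Y)). -/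
/-! Proof: `Ξ_θ = θ ∘ T − dθ`, so `dΞ_θ = d(θ ∘ T)` because `d² = 0`. Expanding `d(θ ∘ T)` with
`X(θ(V)) = (∇_X θ)(V) + θ(∇_X V)` leaves, besides the torsion terms, `θ` applied to the cyclic sum
of `∇_X(T(Y,Z)) − T([X,Y],Z)`, which the first Bianchi identity turns into `𝔖 R(X,Y)Z`. -/

open scoped Manifold

local notation "∞" => (⊤ : ℕ∞)

noncomputable section

variable {E : Type*} [NormedAddCommGroup E] [NormedSpace ℝ E]
  {H : Type*} [TopologicalSpace H]

variable {I : ModelWithCorners ℝ E H}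
  {M : Type*} [TopologicalSpace M] [ChartedSpace H M] [IsManifold I ∞ M]

/-- Smooth real-valued functions on `M`. -/
local notation "Cinf" => C^∞⟮I, M; ℝ⟯
/-- Smooth global vector fields on `M`, as derivations of `C^∞(M)`. -/
local notation "VF" => Derivation ℝ C^∞⟮I, M; ℝ⟯ C^∞⟮I, M; ℝ⟯

omit [IsManifold I ∞ M] in
theorem extD2_sub (β γ : VF → VF → Cinf) (X Y Z : VF) :
    extD2 (fun A B => β A B - γ A B) X Y Z = extD2 β X Y Z - extD2 γ X Y Z := by
  simp only [extD2, map_sub]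
  ring

omit [IsManifold I ∞ M] in
theorem extD2_extD1 {F : Type*} [FunLike F VF Cinf] [AddMonoidHomClass F VF Cinf] (α : F)
    (X Y Z : VF) : extD2 (extD1 α) X Y Z = 0 := by
  have jacobi := congrArg α (lie_jacobi X Y Z)
  rw [map_add, map_add, map_zero, ← lie_skew X ⁅Y, Z⁆, ← lie_skew Y ⁅Z, X⁆,
    ← lie_skew Z ⁅X, Y⁆, map_neg, map_neg, map_neg] at jacobi
  simp only [extD2, extD1, map_sub, Derivation.commutator_apply]
  linear_combination -jacobi

namespace LinearConnection

variable (nab : LinearConnection I M)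

theorem cov_sub_right (X A B : VF) : nab.cov X (A - B) = nab.cov X A - nab.cov X B := by
  have h : A - B = A + (-1 : ℝ) • B := by module
  rw [h, nab.add_right, nab.smul_real_right]
  module

/-- The first Bianchi identity, written with Lie brackets instead of `∇T`. -/
theorem cyclic_cov_torsion_sub_torsion_lie (X Y Z : VF) :
    (nab.cov X (nab.torsion Y Z) - nab.torsion ⁅X, Y⁆ Z)
      + (nab.cov Y (nab.torsion Z X) - nab.torsion ⁅Y, Z⁆ X)
      + (nab.cov Z (nab.torsion X Y) - nab.torsion ⁅Z, X⁆ Y)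
      = nab.curv X Y Z + nab.curv Y Z X + nab.curv Z X Y := by
  have jacobi := lie_jacobi Z X Y
  rw [← lie_skew Z ⁅X, Y⁆, ← lie_skew X ⁅Y, Z⁆, ← lie_skew Y ⁅Z, X⁆] at jacobi
  simp only [torsion, curv, cov_sub_right]
  linear_combination (norm := abel_nf) -jacobi

theorem covOne_sub_covOne_eq_torsion_sub_extD1 {F : Type*} [FunLike F VF Cinf] [AddMonoidHomClass F VF Cinf]
    (θ : F) (X Y : VF) :
    nab.covOne Y θ X - nab.covOne X θ Y = θ (nab.torsion X Y) - extD1 θ X Y := by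
  simp only [covOne, torsion, extD1, map_sub]
  ring

theorem extD2_torsion {F : Type*} [FunLike F VF Cinf] [AddMonoidHomClass F VF Cinf] (θ : F)
    (X Y Z : VF) :
    extD2 (fun A B => θ (nab.torsion A B)) X Y Z =
      θ (nab.curv X Y Z + nab.curv Y Z X + nab.curv Z X Y)
        + nab.covOne X θ (nab.torsion Y Z)
        + nab.covOne Y θ (nab.torsion Z X)
        + nab.covOne Z θ (nab.torsion X Y) := by
  rw [← cyclic_cov_torsion_sub_torsion_lie]
  simp only [extD2, covOne, map_add, map_sub]
  ring

end LinearConnection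

/-- `dΞ_θ(X,Y,Z) = R_θ(X,Y,Z) + (∇_X θ)(T(Y,Z)) + (∇_Y θ)(T(Z,X)) + (∇_Z θ)(T(X,Y))`,
where `Ξ_θ(X,Y) := (∇_Y θ)(X) − (∇_X θ)(Y)`. -/
theorem extD_Xi_eq_curvature_plus_torsion_terms (nab : LinearConnection I M)
    (θ : VF →ₗ[Cinf] Cinf) (X Y Z : VF) :
    extD2 (fun A B => nab.covOne B (⇑θ) A - nab.covOne A (⇑θ) B) X Y Z =
      (θ (nab.curv X Y Z) + θ (nab.curv Y Z X) + θ (nab.curv Z X Y))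
        + nab.covOne X (⇑θ) (nab.torsion Y Z)
        + nab.covOne Y (⇑θ) (nab.torsion Z X)
        + nab.covOne Z (⇑θ) (nab.torsion X Y) := by
  simp only [nab.covOne_sub_covOne_eq_torsion_sub_extD1]
  rw [extD2_sub, nab.extD2_torsion, extD2_extD1 θ, map_add, map_add, sub_zero]
end
end
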